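/- arXiv:1405.1187 — 2 statements merged into one kernel-verified Lean document; each statement's English description precedes it below -/
import Mathlib

section
/- Let A, B be finite sets of positive rationals contained in F_{Q,Q'} = {q/q' : 1 ≤ q ≤ Q, 1 ≤ q' ≤ Q'}, let r, s be coprime positive integers, and let T = max_{m ≤ QQ'} τ(m) where τ is the number-of-divisors function. Then |M(A×B, r/s)| ≤ T² · |A/B|, where M(A×B, r/s) = {(a/a', b/b') ∈ A × B : gcd(a,b) = r, gcd(a',b') = s} with fractions in lowest terms, and A/B is the quotient set. -/
/-!
Write `x = a/a'`, `y = b/b'` in lowest terms with `gcd(a, b) = r`, `gcd(a', b') = s`. Then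
`x / y = ((a/r)(b'/s)) / ((a'/s)(b/r))` and the right-hand side is again in lowest terms. Hence on
the fibre of `(x, y) ↦ x / y` over `c/d` the map `(x, y) ↦ (a/r, a'/s)` is injective with values
in `divisors c × divisors d` (`y` is recovered as `x / (c/d)`), and `c, d ≤ QQ'` because
`x / y ∈ F_{QQ', Q'Q}`.
-/

open scoped Pointwise

/-- The set `F_{Q,Q'} = {q/q' : 1 ≤ q ≤ Q, 1 ≤ q' ≤ Q', q, q' positive integers}`. -/
def farey (Q Q' : ℝ) : Set ℚ :=
  {z : ℚ | ∃ q q' : ℕ, 1 ≤ q ∧ (q : ℝ) ≤ Q ∧ 1 ≤ q' ∧ (q' : ℝ) ≤ Q' ∧ z = (q : ℚ) / (q' : ℚ)}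

/-- `M(A×B, r/s)`: pairs `(a/a', b/b') ∈ A × B` (fractions in lowest terms) with
`gcd(a,b) = r` and `gcd(a',b') = s`. -/
def Mset (A B : Finset ℚ) (r s : ℕ) : Finset (ℚ × ℚ) :=
  (A ×ˢ B).filter (fun p : ℚ × ℚ =>
    Nat.gcd p.1.num.toNat p.2.num.toNat = r ∧ Nat.gcd p.1.den p.2.den = s)

/-- `T(x) = max_{1 ≤ m ≤ x} τ(m)`, `τ` the number-of-divisors function. -/
noncomputable def Tmax (x : ℝ) : ℕ := (Finset.Icc 1 ⌊x⌋₊).sup (fun m => m.divisors.card)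

open Finset

theorem Nat.Coprime.cross_div_gcd {a a' b b' : ℕ} (ha : a.Coprime a') (hb : b.Coprime b')
    (hab : 0 < a.gcd b) (hab' : 0 < a'.gcd b') :
    (a / a.gcd b * (b' / a'.gcd b')).Coprime (a' / a'.gcd b' * (b / a.gcd b)) := by
  have hab_cop := Nat.coprime_div_gcd_div_gcd hab
  have hab'_cop := Nat.coprime_div_gcd_div_gcd hab'
  have haa' : (a / a.gcd b).Coprime (a' / a'.gcd b') :=
    (ha.coprime_div_left (Nat.gcd_dvd_left a b)).coprime_div_right (Nat.gcd_dvd_left a' b')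
  have hb'b : (b' / a'.gcd b').Coprime (b / a.gcd b) :=
    (hb.symm.coprime_div_left (Nat.gcd_dvd_right a' b')).coprime_div_right (Nat.gcd_dvd_right a b)
  exact (haa'.mul_right hab_cop).mul_left (hab'_cop.symm.mul_right hb'b)

theorem Rat.natCast_div_div_natCast_div_eq {a a' b b' r s : ℕ} (hr : 0 < r) (hs : 0 < s)
    (ha : r ∣ a) (hb : r ∣ b) (ha' : s ∣ a') (hb' : s ∣ b') :
    (a / a' : ℚ) / (b / b') = ((a / r * (b' / s) : ℕ) : ℚ) / ((a' / s * (b / r) : ℕ) : ℚ) := by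
  obtain ⟨a₀, rfl⟩ := ha
  obtain ⟨b₀, rfl⟩ := hb
  obtain ⟨a₀', rfl⟩ := ha'
  obtain ⟨b₀', rfl⟩ := hb'
  have hrs : (r * s : ℚ) ≠ 0 := by positivity
  simp only [Nat.mul_div_cancel_left _ hr, Nat.mul_div_cancel_left _ hs, Nat.cast_mul]
  rw [div_div_div_eq, show (r * a₀ * (s * b₀') : ℚ) = r * s * (a₀ * b₀') by ring,
    show (s * a₀' * (r * b₀) : ℚ) = r * s * (a₀' * b₀) by ring, mul_div_mul_left _ _ hrs]

theorem Rat.num_den_natCast_div_of_coprime {n d : ℕ} (hd : 0 < d) (h : n.Coprime d) :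
    ((n : ℚ) / d).num = n ∧ ((n : ℚ) / d).den = d := by
  have hd' : (0 : ℤ) < d := by exact_mod_cast hd
  have h' : (n : ℤ).natAbs.Coprime (d : ℤ).natAbs := by simpa using h
  have hnum := Rat.num_div_eq_of_coprime hd' h'
  have hden := Rat.den_div_eq_of_coprime hd' h'
  rw [Int.cast_natCast, Int.cast_natCast] at hnum hden
  exact ⟨hnum, by exact_mod_cast hden⟩

theorem Rat.natCast_num_toNat_div_den {x : ℚ} (hx : 0 ≤ x) : (x.num.toNat / x.den : ℚ) = x := by
  rw [show (x.num.toNat : ℚ) = x.num by exact_mod_cast Int.toNat_of_nonneg (Rat.num_nonneg.mpr hx),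
    Rat.num_div_den]

theorem Rat.coprime_num_toNat_den {x : ℚ} (hx : 0 ≤ x) : x.num.toNat.Coprime x.den := by
  rw [show x.num.toNat = x.num.natAbs by have := Rat.num_nonneg.mpr hx; omega]
  exact x.reduced

theorem Rat.num_toNat_div_den_div_eq {x y : ℚ} (hx : 0 < x) (hy : 0 < y) {r s : ℕ}
    (hr : x.num.toNat.gcd y.num.toNat = r) (hs : x.den.gcd y.den = s) :
    (x / y).num.toNat = x.num.toNat / r * (y.den / s) ∧
      (x / y).den = x.den / s * (y.num.toNat / r) := by
  have hxnum : 0 < x.num.toNat := by simpa using Rat.num_pos.mpr hx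
  have hynum : 0 < y.num.toNat := by simpa using Rat.num_pos.mpr hy
  have hr0 : 0 < r := hr ▸ Nat.gcd_pos_of_pos_left _ hxnum
  have hs0 : 0 < s := hs ▸ Nat.gcd_pos_of_pos_left _ x.den_pos
  have hcop := (Rat.coprime_num_toNat_den hx.le).cross_div_gcd (Rat.coprime_num_toNat_den hy.le)
    (hr ▸ hr0) (hs ▸ hs0)
  rw [hr, hs] at hcop
  have hdiv : x / y = ((x.num.toNat / r * (y.den / s) : ℕ) : ℚ) /
      ((x.den / s * (y.num.toNat / r) : ℕ) : ℚ) := by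
    conv_lhs => rw [← Rat.natCast_num_toNat_div_den hx.le, ← Rat.natCast_num_toNat_div_den hy.le]
    exact Rat.natCast_div_div_natCast_div_eq hr0 hs0 (hr ▸ Nat.gcd_dvd_left _ _)
      (hr ▸ Nat.gcd_dvd_right _ _) (hs ▸ Nat.gcd_dvd_left _ _) (hs ▸ Nat.gcd_dvd_right _ _)
  have hd : 0 < x.den / s * (y.num.toNat / r) :=
    Nat.mul_pos (Nat.div_pos (hs ▸ Nat.gcd_le_left _ x.den_pos) hs0)
      (Nat.div_pos (hr ▸ Nat.gcd_le_right _ hynum) hr0)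
  obtain ⟨hnum, hden⟩ := Rat.num_den_natCast_div_of_coprime hd hcop
  rw [hdiv, hden, hnum]
  exact ⟨Int.toNat_natCast _, rfl⟩

theorem Rat.num_toNat_le_and_den_le_of_natCast_div {q q' : ℕ} (hq : 0 < q) (hq' : 0 < q') :
    ((q : ℚ) / q').num.toNat ≤ q ∧ ((q : ℚ) / q').den ≤ q' := by
  rw [Rat.natCast_div_eq_divInt]
  have hnum :=
    Int.le_of_dvd (by exact_mod_cast hq) (Rat.num_dvd q (Int.natCast_ne_zero.mpr hq'.ne'))
  have hden := Int.le_of_dvd (by exact_mod_cast hq') (Rat.den_dvd q q')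
  omega

theorem pos_of_mem_farey {Q Q' : ℝ} {x : ℚ} (hx : x ∈ farey Q Q') : 0 < x := by
  obtain ⟨q, q', hq, -, hq', -, rfl⟩ := hx
  have : (0 : ℚ) < q := by exact_mod_cast hq
  have : (0 : ℚ) < q' := by exact_mod_cast hq'
  positivity

theorem num_toNat_le_and_den_le_of_mem_farey {Q Q' : ℝ} {x : ℚ} (hx : x ∈ farey Q Q') :
    (x.num.toNat : ℝ) ≤ Q ∧ (x.den : ℝ) ≤ Q' := by
  obtain ⟨q, q', hq, hqQ, hq', hqQ', rfl⟩ := hx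
  obtain ⟨hnum, hden⟩ := Rat.num_toNat_le_and_den_le_of_natCast_div hq hq'
  exact ⟨le_trans (by exact_mod_cast hnum) hqQ, le_trans (by exact_mod_cast hden) hqQ'⟩

theorem div_mem_farey {Q Q' R R' : ℝ} {x y : ℚ} (hx : x ∈ farey Q Q') (hy : y ∈ farey R R') :
    x / y ∈ farey (Q * R') (Q' * R) := by
  obtain ⟨a, a', ha, haQ, ha', ha'Q', rfl⟩ := hx
  obtain ⟨b, b', hb, hbR, hb', hb'R', rfl⟩ := hy
  refine ⟨a * b', a' * b, Nat.one_le_iff_ne_zero.mpr (by positivity), ?_,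
    Nat.one_le_iff_ne_zero.mpr (by positivity), ?_, by push_cast; exact div_div_div_eq _ _ _ _⟩
  · push_cast
    exact mul_le_mul haQ hb'R' (Nat.cast_nonneg _) (le_trans (Nat.cast_nonneg _) haQ)
  · push_cast
    exact mul_le_mul ha'Q' hbR (Nat.cast_nonneg _) (le_trans (Nat.cast_nonneg _) ha'Q')

theorem card_divisors_le_Tmax {m : ℕ} {x : ℝ} (hm : 0 < m) (hmx : (m : ℝ) ≤ x) :
    #m.divisors ≤ Tmax x :=
  Finset.le_sup (f := fun m : ℕ ↦ #m.divisors) (Finset.mem_Icc.mpr ⟨hm, Nat.le_floor hmx⟩)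

theorem card_filter_Mset_div_eq_le {A B : Finset ℚ} (hA : ∀ x ∈ A, 0 < x) (hB : ∀ y ∈ B, 0 < y)
    (r s : ℕ) (q : ℚ) :
    #{p ∈ Mset A B r s | p.1 / p.2 = q} ≤ #q.num.toNat.divisors * #q.den.divisors := by
  rw [← card_product]
  refine card_le_card_of_injOn (fun p ↦ (p.1.num.toNat / r, p.1.den / s))
    (fun p hp ↦ ?_) (fun p hp p' hp' hpp' ↦ ?_)
  · simp only [coe_filter, Mset, mem_filter, mem_product, Set.mem_ofPred_eq] at hp
    obtain ⟨⟨⟨hx, hy⟩, hr, hs⟩, rfl⟩ := hp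
    have hq := div_pos (hA _ hx) (hB _ hy)
    obtain ⟨hnum, hden⟩ := Rat.num_toNat_div_den_div_eq (hA _ hx) (hB _ hy) hr hs
    simp only [coe_product, Set.mem_prod, mem_coe, Nat.mem_divisors]
    exact ⟨⟨Dvd.intro _ hnum.symm, by simpa using Rat.num_pos.mpr hq⟩,
      ⟨Dvd.intro _ hden.symm, (Rat.den_pos _).ne'⟩⟩
  · simp only [coe_filter, Mset, mem_filter, mem_product, Set.mem_ofPred_eq] at hp hp'
    obtain ⟨⟨⟨hx, -⟩, hr, hs⟩, hq⟩ := hp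
    obtain ⟨⟨⟨hx', -⟩, hr', hs'⟩, hq'⟩ := hp'
    obtain ⟨hnum, hden⟩ := Prod.mk.inj hpp'
    have hfst : p.1 = p'.1 := calc
      p.1 = (p.1.num.toNat / p.1.den : ℚ) := (Rat.natCast_num_toNat_div_den (hA _ hx).le).symm
      _ = (p'.1.num.toNat / p'.1.den : ℚ) := by
        rw [(Nat.div_left_inj (hr ▸ Nat.gcd_dvd_left _ _) (hr' ▸ Nat.gcd_dvd_left _ _)).mp hnum,
          (Nat.div_left_inj (hs ▸ Nat.gcd_dvd_left _ _) (hs' ▸ Nat.gcd_dvd_left _ _)).mp hden]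
      _ = p'.1 := Rat.natCast_num_toNat_div_den (hA _ hx').le
    have hsnd : p.2 = p'.2 := calc
      p.2 = p.1 / (p.1 / p.2) := (div_div_cancel₀ (hA _ hx).ne').symm
      _ = p'.1 / (p'.1 / p'.2) := by rw [hq, hq', hfst]
      _ = p'.2 := div_div_cancel₀ (hA _ hx').ne'
    exact Prod.ext hfst hsnd

theorem Mset_card_le_T_sq_general (Q Q' : ℝ)
    (A B : Finset ℚ) (hA : ↑A ⊆ farey Q Q') (hB : ↑B ⊆ farey Q Q')
    (r s : ℕ) :
    (Mset A B r s).card ≤ (Tmax (Q * Q')) ^ 2 * (A / B).card := by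
  refine card_le_mul_card_image_of_maps_to (f := fun p : ℚ × ℚ ↦ p.1 / p.2)
    (fun p hp ↦ ?_) _ (fun q hq ↦ ?_)
  · obtain ⟨hp, -⟩ := mem_filter.mp hp
    exact div_mem_div (mem_product.mp hp).1 (mem_product.mp hp).2
  · obtain ⟨x, hx, y, hy, rfl⟩ := mem_div.mp hq
    have hxy := div_mem_farey (hA hx) (hB hy)
    have hxy_pos := pos_of_mem_farey hxy
    obtain ⟨hnum, hden⟩ := num_toNat_le_and_den_le_of_mem_farey hxy
    calc _ ≤ #(x / y).num.toNat.divisors * #(x / y).den.divisors :=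
          card_filter_Mset_div_eq_le (fun x hx ↦ pos_of_mem_farey (hA hx))
            (fun y hy ↦ pos_of_mem_farey (hB hy)) r s _
      _ ≤ Tmax (Q * Q') * Tmax (Q * Q') := Nat.mul_le_mul
          (card_divisors_le_Tmax (by simpa using Rat.num_pos.mpr hxy_pos) hnum)
          (card_divisors_le_Tmax (Rat.den_pos _) (by rwa [mul_comm]))
      _ = Tmax (Q * Q') ^ 2 := (sq _).symm

/-- `|M(A×B, r/s)| ≤ T² · |A/B|` for `A, B ⊆ F_{Q,Q'}`, `T = max_{m ≤ QQ'} τ(m)`. -/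
theorem Mset_card_le_T_sq (Q Q' : ℝ) (hQ : 1 ≤ Q) (hQ' : 1 ≤ Q')
    (A B : Finset ℚ) (hA : ↑A ⊆ farey Q Q') (hB : ↑B ⊆ farey Q Q')
    (r s : ℕ) (hr : 0 < r) (hs : 0 < s) (hrs : Nat.Coprime r s) :
    (Mset A B r s).card ≤ (Tmax (Q * Q')) ^ 2 * (A / B).card :=
  Mset_card_le_T_sq_general Q Q' A B hA hB r s
end

section
/- Let c, d be coprime positive integers and let A, B be finite sets of positive rationals. For coprime positive integers r, s, the number of pairs (a/a', b/b') ∈ A × B (fractions in lowest terms) with gcd(a,b) = r, gcd(a',b') = s, and (a/a')/(b/b') = c/d is at most τ(c)·τ(d). -/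
/-! Write a pair as `(a/a', b/b')` with `r = gcd(a, b)`, `s = gcd(a', b')`. Cross-multiplying
`(a/a')/(b/b') = c/d` gives `a b' d = b a' c`; since `a/r` is coprime to `b/r` and to `a'`, it
divides `c`, and symmetrically `a'/s` divides `d`. The pair is recovered from `(a/r, a'/s)`:
first `a/a'`, then `b/b'` from the ratio `c/d`. So the pairs inject into
`divisors c × divisors d`. -/

theorem Nat.div_gcd_dvd_of_mul_eq_mul {a a' b b' c d : ℕ} (ha : 0 < a) (hco : a.Coprime a')
    (h : a * b' * d = b * a' * c) : a / a.gcd b ∣ c := by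
  have hg : 0 < a.gcd b := Nat.gcd_pos_of_pos_left b ha
  have hcop : (a / a.gcd b).Coprime (b / a.gcd b * a') :=
    (Nat.coprime_div_gcd_div_gcd hg).mul_right (hco.coprime_div_left (Nat.gcd_dvd_left a b))
  refine hcop.dvd_of_dvd_mul_left ⟨b' * d, Nat.eq_of_mul_eq_mul_left hg ?_⟩
  rw [← mul_assoc, ← mul_assoc, ← mul_assoc, Nat.mul_div_cancel' (Nat.gcd_dvd_left a b),
    Nat.mul_div_cancel' (Nat.gcd_dvd_right a b), ← h, mul_assoc]

namespace Rat

variable {p q : ℚ}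

theorem natCast_num_toNat (hq : 0 ≤ q) : (q.num.toNat : ℚ) = q.num := by
  exact_mod_cast Int.toNat_of_nonneg (num_nonneg.2 hq)

theorem num_toNat_coprime_den (hq : 0 ≤ q) : q.num.toNat.Coprime q.den := by
  have := num_nonneg.2 hq
  have : q.num.toNat = q.num.natAbs := by omega
  exact this ▸ q.reduced

theorem eq_of_num_toNat_eq_of_den_eq (hp : 0 ≤ p) (hq : 0 ≤ q)
    (hnum : p.num.toNat = q.num.toNat) (hden : p.den = q.den) : p = q := by
  have := num_nonneg.2 hp
  have := num_nonneg.2 hq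
  exact Rat.ext (by omega) hden

theorem num_toNat_mul_den_mul_eq_of_div_eq {c d : ℕ} (hp : 0 ≤ p) (hq : 0 < q) (hd : d ≠ 0)
    (h : p / q = c / d) : p.num.toNat * q.den * d = q.num.toNat * p.den * c := by
  rw [← p.num_div_den, ← q.num_div_den] at h
  have : (q.num : ℚ) ≠ 0 := by exact_mod_cast (num_pos.2 hq).ne'
  field_simp at h
  have : ((p.num.toNat * q.den * d : ℕ) : ℚ) = (q.num.toNat * p.den * c : ℕ) := by
    push_cast [natCast_num_toNat hp, natCast_num_toNat hq.le]
    linear_combination h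
  exact_mod_cast this

theorem num_toNat_div_gcd_dvd_and_den_div_gcd_dvd {c d : ℕ} (hp : 0 < p) (hq : 0 < q)
    (hd : d ≠ 0) (h : p / q = c / d) :
    p.num.toNat / p.num.toNat.gcd q.num.toNat ∣ c ∧ p.den / p.den.gcd q.den ∣ d := by
  have key := num_toNat_mul_den_mul_eq_of_div_eq hp.le hq hd h
  have hnum : 0 < p.num.toNat := by
    have := num_pos.2 hp
    omega
  have key' : p.den * q.num.toNat * c = q.den * p.num.toNat * d := by linarith
  exact ⟨Nat.div_gcd_dvd_of_mul_eq_mul hnum (num_toNat_coprime_den hp.le) key,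
    Nat.div_gcd_dvd_of_mul_eq_mul p.den_pos (num_toNat_coprime_den hp.le).symm key'⟩

end Rat

theorem representations_le_tau_general (A B : Finset ℚ) (hA : ∀ a ∈ A, 0 < a) (hB : ∀ b ∈ B, 0 < b)
    (c d r s : ℕ) (hc : 0 < c) (hd : 0 < d) :
    ((A ×ˢ B).filter (fun p : ℚ × ℚ =>
        Nat.gcd p.1.num.toNat p.2.num.toNat = r ∧ Nat.gcd p.1.den p.2.den = s ∧
        p.1 / p.2 = (c : ℚ) / (d : ℚ))).card ≤ c.divisors.card * d.divisors.card := by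
  rw [← Finset.card_product]
  refine Finset.card_le_card_of_injOn (fun p => (p.1.num.toNat / r, p.1.den / s)) ?_ ?_
  · rintro ⟨p, q⟩ hpq
    simp only [Finset.coe_filter, Finset.mem_product, Set.mem_ofPred_eq] at hpq
    obtain ⟨⟨hp, hq⟩, rfl, rfl, h⟩ := hpq
    obtain ⟨hc', hd'⟩ :=
      Rat.num_toNat_div_gcd_dvd_and_den_div_gcd_dvd (hA p hp) (hB q hq) hd.ne' h
    simp only [Finset.coe_product, Set.mem_prod, Finset.mem_coe, Nat.mem_divisors]
    exact ⟨⟨hc', hc.ne'⟩, ⟨hd', hd.ne'⟩⟩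
  · rintro ⟨p, q⟩ hpq ⟨p', q'⟩ hpq' heq
    simp only [Finset.coe_filter, Finset.mem_product, Set.mem_ofPred_eq] at hpq hpq'
    obtain ⟨⟨hp, -⟩, hr, hs, h⟩ := hpq
    obtain ⟨⟨hp', -⟩, hr', hs', h'⟩ := hpq'
    simp only [Prod.mk.injEq] at heq
    have hpp' : p = p' := Rat.eq_of_num_toNat_eq_of_den_eq (hA p hp).le (hA p' hp').le
      ((Nat.div_left_inj (hr ▸ Nat.gcd_dvd_left _ _) (hr' ▸ Nat.gcd_dvd_left _ _)).1 heq.1)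
      ((Nat.div_left_inj (hs ▸ Nat.gcd_dvd_left _ _) (hs' ▸ Nat.gcd_dvd_left _ _)).1 heq.2)
    have hqq' : q = q' := by
      rw [← div_div_cancel₀ (b := q) (hA p hp).ne', h, hpp', ← h',
        div_div_cancel₀ (b := q') (hA p' hp').ne']
    exact Prod.ext hpp' hqq'

/-- For coprime positive integers `c, d` and `r, s`, the number of pairs
`(a/a', b/b') ∈ A × B` (fractions in lowest terms) with `gcd(a,b) = r`,
`gcd(a',b') = s` and `(a/a')/(b/b') = c/d` is at most `τ(c)·τ(d)`. -/
theorem representations_le_tau (A B : Finset ℚ) (hA : ∀ a ∈ A, 0 < a) (hB : ∀ b ∈ B, 0 < b)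
    (c d r s : ℕ) (hc : 0 < c) (hd : 0 < d) (hcd : Nat.Coprime c d)
    (hr : 0 < r) (hs : 0 < s) (hrs : Nat.Coprime r s) :
    ((A ×ˢ B).filter (fun p : ℚ × ℚ =>
        Nat.gcd p.1.num.toNat p.2.num.toNat = r ∧ Nat.gcd p.1.den p.2.den = s ∧
        p.1 / p.2 = (c : ℚ) / (d : ℚ))).card ≤ c.divisors.card * d.divisors.card :=
  representations_le_tau_general A B hA hB c d r s hc hd
end
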